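/- arXiv:2605.08915 — 9 statements merged into one kernel-verified Lean document; each statement's English description precedes it below -/
import Mathlib

section
/- Let d be a natural number, let τ ∈ ℝ, let g : ℝ → ℝ^d be continuous, and let M : ℝ → ℝ^d be differentiable at every t > τ, continuous at τ with M(τ) = g(τ), and satisfy the MeanFlow identity M(t) = g(t) − (t − τ) • M'(t) for all t > τ. Then M(t) = (t − τ)⁻¹ • ∫_{τ}^{t} g(s) ds for all t > τ; that is, the MeanFlow identity together with the boundary condition M(τ) = g(τ) characterizes the average of g over [τ, t]. -/
/-- The MeanFlow identity together with the boundary condition `M τ = g τ`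
characterizes the average of `g` over `[τ, t]`. -/
theorem stmt_1 (d : ℕ) (τ : ℝ) (g M : ℝ → EuclideanSpace ℝ (Fin d))
    (hg : Continuous g)
    (hdiff : ∀ t : ℝ, τ < t → DifferentiableAt ℝ M t)
    (hcont : ContinuousAt M τ)
    (hbc : M τ = g τ)
    (hid : ∀ t : ℝ, τ < t → M t = g t - (t - τ) • deriv M t) :
    ∀ t : ℝ, τ < t → M t = (t - τ)⁻¹ • ∫ s in τ..t, g s := by
  intro t ht
  set F : ℝ → EuclideanSpace ℝ (Fin d) := fun s => (s - τ) • M s with hF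
  have hMcont : ContinuousOn M (Set.Icc τ t) := by
    intro x hx
    rcases eq_or_lt_of_le hx.1 with h | h
    · exact (h ▸ hcont).continuousWithinAt
    · exact ((hdiff x h).continuousAt).continuousWithinAt
  have hFcont : ContinuousOn F (Set.Icc τ t) :=
    (continuousOn_id.sub continuousOn_const).smul hMcont
  have hFderiv : ∀ x ∈ Set.Ioo τ t, HasDerivWithinAt F (g x) (Set.Ioi x) x := by
    intro x hx
    have hM := (hdiff x hx.1).hasDerivAt
    have h1 : HasDerivAt (fun s : ℝ => s - τ) 1 x := (hasDerivAt_id x).sub_const τ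
    have h2 : HasDerivAt F ((x - τ) • deriv M x + (1 : ℝ) • M x) x := h1.smul hM
    have h3 : (x - τ) • deriv M x + (1 : ℝ) • M x = g x := by
      rw [one_smul, hid x hx.1]
      abel
    exact (h3 ▸ h2).hasDerivWithinAt
  have hgi : IntervalIntegrable g MeasureTheory.volume τ t :=
    hg.intervalIntegrable τ t
  have key : ∫ s in τ..t, g s = F t - F τ :=
    intervalIntegral.integral_eq_sub_of_hasDeriv_right_of_le ht.le hFcont hFderiv hgi
  have hFτ : F τ = 0 := by simp [hF]
  have hne : t - τ ≠ 0 := sub_ne_zero.mpr (ne_of_gt ht)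
  rw [key, hFτ, sub_zero, hF]
  rw [smul_smul, inv_mul_cancel₀ hne, one_smul]
end

section
/- Let n, d be natural numbers, γ ∈ ℝ with γ ≠ 0, fix ξ, x ∈ ℝ^n and t ∈ ℝ, and set l(τ) = √(‖x − ξ‖² + (t − τ)²). Let U : ℝ → ℝ^d be differentiable on an open interval I with γ • U'(τ) = F(τ) for some function F : ℝ → ℝ^d, and let M : ℝ^d × ℝ → ℝ^d be continuously Fréchet differentiable. Suppose there is a constant c ∈ ℝ^d such that l(τ) • M(U(τ), τ) = c − U(τ) for all τ ∈ I. Then for every τ ∈ I with l(τ) > 0, the temporal MeanFlow constraint holds: (t − τ) • M(U(τ), τ) = l(τ) • [γ⁻¹ • F(τ) + l(τ) • D_u M(U(τ), τ)(γ⁻¹ • F(τ))] + l(τ)² • ∂_τ M(U(τ), τ). -/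
open Filter Topology

theorem hasDerivAt_sqrt_add_sub_sq {A t τ : ℝ} (h : A + (t - τ) ^ 2 ≠ 0) :
    HasDerivAt (fun σ => √(A + (t - σ) ^ 2)) (-(t - τ) / √(A + (t - τ) ^ 2)) τ := by
  have hinner : HasDerivAt (fun σ => A + (t - σ) ^ 2) (-(2 * (t - τ))) τ := by
    simpa using (((hasDerivAt_id τ).const_sub t).pow 2).const_add A
  convert hinner.sqrt h using 1
  field_simp

section MeanFlow

variable {E : Type*} [NormedAddCommGroup E] [NormedSpace ℝ E]
  {M : E × ℝ → E} {U : ℝ → E} {U' c : E} {l : ℝ → ℝ} {l' τ : ℝ}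

theorem hasDerivAt_comp_prodMk_id (hM : DifferentiableAt ℝ M (U τ, τ))
    (hU : HasDerivAt U U' τ) :
    HasDerivAt (fun σ => M (U σ, σ)) (fderiv ℝ M (U τ, τ) (U', 1)) τ :=
  hM.hasFDerivAt.comp_hasDerivAt_of_eq τ (hU.prodMk (hasDerivAt_id τ)) rfl

theorem smul_fderiv_add_smul_eq_neg_of_smul_eq_const_sub
    (hl : HasDerivAt l l' τ) (hU : HasDerivAt U U' τ) (hM : DifferentiableAt ℝ M (U τ, τ))
    (hc : (fun σ => l σ • M (U σ, σ)) =ᶠ[𝓝 τ] fun σ => c - U σ) :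
    l τ • fderiv ℝ M (U τ, τ) (U', 1) + l' • M (U τ, τ) = -U' :=
  ((hl.smul (hasDerivAt_comp_prodMk_id hM hU)).congr_of_eventuallyEq hc.symm).unique
    (hU.const_sub c)

/-- Multiplying the differentiated identity by `l τ` clears the denominator of `l'`. -/
theorem sub_smul_eq_of_smul_eq_const_sub {t : ℝ} (hlτ : l τ ≠ 0)
    (hl : HasDerivAt l (-(t - τ) / l τ) τ) (hU : HasDerivAt U U' τ)
    (hM : DifferentiableAt ℝ M (U τ, τ))
    (hc : (fun σ => l σ • M (U σ, σ)) =ᶠ[𝓝 τ] fun σ => c - U σ) :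
    (t - τ) • M (U τ, τ)
      = l τ • (U' + l τ • fderiv ℝ M (U τ, τ) (U', 0))
        + l τ ^ 2 • fderiv ℝ M (U τ, τ) (0, 1) := by
  have key := congrArg (l τ • ·) (smul_fderiv_add_smul_eq_neg_of_smul_eq_const_sub hl hU hM hc)
  have hsplit : fderiv ℝ M (U τ, τ) (U', 1)
      = fderiv ℝ M (U τ, τ) (U', 0) + fderiv ℝ M (U τ, τ) (0, 1) := by
    rw [← map_add, Prod.mk_add_mk, add_zero, zero_add]
  simp only [smul_add, smul_smul, mul_div_cancel₀ _ hlτ, hsplit] at key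
  linear_combination (norm := module) -key

end MeanFlow

/-- `fderiv ℝ M p (v, 0)` is the state derivative `D_u M p v`, and `fderiv ℝ M p (0, 1)` the
time derivative `∂_τ M p`. -/
theorem stmt_3 (n d : ℕ) (γ : ℝ) (hγ : γ ≠ 0)
    (ξ x : EuclideanSpace ℝ (Fin n)) (t : ℝ)
    (l : ℝ → ℝ)
    (hl : ∀ τ : ℝ, l τ = Real.sqrt (‖x - ξ‖ ^ 2 + (t - τ) ^ 2))
    (a b : ℝ)
    (U U' F : ℝ → EuclideanSpace ℝ (Fin d))
    (hU : ∀ τ ∈ Set.Ioo a b, HasDerivAt U (U' τ) τ)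
    (hF : ∀ τ ∈ Set.Ioo a b, γ • U' τ = F τ)
    (M : EuclideanSpace ℝ (Fin d) × ℝ → EuclideanSpace ℝ (Fin d))
    (hM : ContDiff ℝ 1 M)
    (c : EuclideanSpace ℝ (Fin d))
    (hc : ∀ τ ∈ Set.Ioo a b, l τ • M (U τ, τ) = c - U τ) :
    ∀ τ ∈ Set.Ioo a b, 0 < l τ →
      (t - τ) • M (U τ, τ)
        = l τ • (γ⁻¹ • F τ + l τ • (fderiv ℝ M (U τ, τ)) (γ⁻¹ • F τ, 0))
          + (l τ) ^ 2 • (fderiv ℝ M (U τ, τ)) (0, 1) := by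
  intro τ hτ hlpos
  have hl_eq : l = fun σ => √(‖x - ξ‖ ^ 2 + (t - σ) ^ 2) := funext hl
  have hl' : HasDerivAt l (-(t - τ) / l τ) τ := by
    have hrad : ‖x - ξ‖ ^ 2 + (t - τ) ^ 2 ≠ 0 := by
      intro h0
      simp [hl, h0] at hlpos
    rw [hl_eq]
    exact hasDerivAt_sqrt_add_sub_sq hrad
  have hU'F : U' τ = γ⁻¹ • F τ := by
    rw [← hF τ hτ, inv_smul_smul₀ hγ]
  rw [← hU'F]
  exact sub_smul_eq_of_smul_eq_const_sub hlpos.ne' hl' (hU τ hτ)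
    (hM.differentiable one_ne_zero _) (eventually_of_mem (isOpen_Ioo.mem_nhds hτ) hc)
end

section
/- Let n, d be natural numbers, fix τ, t ∈ ℝ and x ∈ ℝ^n, and set l(ξ) = √(‖x − ξ‖² + (t − τ)²). Let V : ℝ^n → ℝ^d be Fréchet differentiable on an open set Ω ⊆ ℝ^n, and let M : ℝ^d × ℝ^n → ℝ^d be continuously Fréchet differentiable. Suppose there is a constant c ∈ ℝ^d such that l(ξ) • M(V(ξ), ξ) = c − V(ξ) for all ξ ∈ Ω. Then for every ξ ∈ Ω with l(ξ) > 0 and every direction w ∈ ℝ^n, the first-order spatial MeanFlow constraint holds: l(ξ) • [D V(ξ)(w) + l(ξ) • D_u M(V(ξ), ξ)(D V(ξ)(w))] = ⟪x − ξ, w⟫ • M(V(ξ), ξ) − l(ξ)² • D_ξ M(V(ξ), ξ)(w). -/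
open scoped RealInnerProductSpace
open Filter Topology

/-! Differentiate `l • M (V ·, ·) = c - V` at `ξ` in the direction `w`: the product rule brings in
`Dl(ξ) w = -⟪x - ξ, w⟫ / l ξ`, the chain rule gives `DM (DV w, w)`, which splits into the two partial
derivatives, and multiplying by `l ξ` clears the denominator. -/

section

variable {E F G : Type*} [NormedAddCommGroup E] [NormedAddCommGroup F] [NormedAddCommGroup G]

theorem hasFDerivAt_sqrt_norm_sub_sq_add [InnerProductSpace ℝ E] {x ξ : E} {a : ℝ}
    (h : 0 < ‖x - ξ‖ ^ 2 + a) :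
    HasFDerivAt (fun η => √(‖x - η‖ ^ 2 + a))
      (-(√(‖x - ξ‖ ^ 2 + a))⁻¹ • innerSL ℝ (x - ξ)) ξ := by
  have hsub : HasFDerivAt (fun η => x - η) (-ContinuousLinearMap.id ℝ E) ξ :=
    (hasFDerivAt_id ξ).const_sub x
  refine ((hsub.norm_sq.add_const a).sqrt h.ne').congr_fderiv ?_
  ext w
  simp only [smul_apply, ContinuousLinearMap.comp_apply,
    neg_apply, ContinuousLinearMap.coe_id', id_eq, innerSL_apply_apply,
    inner_neg_right, smul_eq_mul, nsmul_eq_mul, Nat.cast_ofNat]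
  field_simp

variable [NormedSpace ℝ E] [NormedSpace ℝ F] [NormedSpace ℝ G]

theorem HasFDerivAt.comp_prodMk_id {M : F × E → G} {V : E → F} {DM : F × E →L[ℝ] G}
    {DV : E →L[ℝ] F} {ξ : E} (hM : HasFDerivAt M DM (V ξ, ξ)) (hV : HasFDerivAt V DV ξ) :
    HasFDerivAt (fun η => M (V η, η)) (DM.comp (DV.prod (.id ℝ E))) ξ :=
  hM.comp (f := fun η => (V η, η)) ξ (hV.prodMk (hasFDerivAt_id ξ))

theorem ContinuousLinearMap.map_prodMk_eq_add (f : F × E →L[ℝ] G) (u : F) (w : E) :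
    f (u, w) = f (u, 0) + f (0, w) := by
  rw [← map_add, Prod.mk_add_mk, add_zero, zero_add]

theorem smul_apply_add_apply_smul_eq_neg_of_smul_eq_const_sub {l : E → ℝ} {g V : E → F}
    {L : E →L[ℝ] ℝ} {Dg DV : E →L[ℝ] F} {c : F} {ξ : E}
    (hl : HasFDerivAt l L ξ) (hg : HasFDerivAt g Dg ξ) (hV : HasFDerivAt V DV ξ)
    (h : ∀ᶠ η in 𝓝 ξ, l η • g η = c - V η) (w : E) :
    l ξ • Dg w + L w • g ξ = -DV w := by
  have := ((hl.smul hg).congr_of_eventuallyEq (h.mono fun _ => Eq.symm)).unique (hV.const_sub c)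
  simpa using congrArg (· w) this

end

-- `D_u M (u, ξ) v` and `D_ξ M (u, ξ) w` are `fderiv ℝ M (u, ξ) (v, 0)` and `fderiv ℝ M (u, ξ) (0, w)`.
/-- First-order spatial MeanFlow constraint. Differentiating the
fundamental identity `l ξ • M (V ξ, ξ) = c − V ξ` on the open set `Ω` in a direction
`w` yields
`l • (DV(w) + l • D_u M (DV(w))) = ⟪x − ξ, w⟫ • M − l² • D_ξ M (w)`.
Partial Fréchet derivatives of `M` are encoded via the full Fréchet derivative:
`D_u M (u, ξ) v = fderiv ℝ M (u, ξ) (v, 0)` and `D_ξ M (u, ξ) w = fderiv ℝ M (u, ξ) (0, w)`. -/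
theorem stmt_4 (n d : ℕ) (τ t : ℝ) (x : EuclideanSpace ℝ (Fin n))
    (l : EuclideanSpace ℝ (Fin n) → ℝ)
    (hl : ∀ ξ, l ξ = Real.sqrt (‖x - ξ‖ ^ 2 + (t - τ) ^ 2))
    (Ω : Set (EuclideanSpace ℝ (Fin n))) (hΩ : IsOpen Ω)
    (V : EuclideanSpace ℝ (Fin n) → EuclideanSpace ℝ (Fin d))
    (hV : DifferentiableOn ℝ V Ω)
    (M : EuclideanSpace ℝ (Fin d) × EuclideanSpace ℝ (Fin n) → EuclideanSpace ℝ (Fin d))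
    (hM : ContDiff ℝ 1 M)
    (c : EuclideanSpace ℝ (Fin d))
    (hc : ∀ ξ ∈ Ω, l ξ • M (V ξ, ξ) = c - V ξ) :
    ∀ ξ ∈ Ω, 0 < l ξ → ∀ w : EuclideanSpace ℝ (Fin n),
      l ξ • (fderiv ℝ V ξ w + l ξ • (fderiv ℝ M (V ξ, ξ)) (fderiv ℝ V ξ w, 0))
        = ⟪x - ξ, w⟫ • M (V ξ, ξ)
          - (l ξ) ^ 2 • (fderiv ℝ M (V ξ, ξ)) (0, w) := by
  intro ξ hξ hlξ w
  have hΩξ : Ω ∈ 𝓝 ξ := hΩ.mem_nhds hξ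
  have hl' : HasFDerivAt l (-(l ξ)⁻¹ • innerSL ℝ (x - ξ)) ξ := by
    rw [funext hl] at hlξ ⊢
    exact hasFDerivAt_sqrt_norm_sub_sq_add (Real.sqrt_pos.mp hlξ)
  have hV' := (hV.differentiableAt hΩξ).hasFDerivAt
  have hM' := ((hM.differentiable one_ne_zero) (V ξ, ξ)).hasFDerivAt
  have key := smul_apply_add_apply_smul_eq_neg_of_smul_eq_const_sub hl'
    (hM'.comp_prodMk_id hV') hV' (eventually_of_mem hΩξ hc) w
  simp only [smul_apply, ContinuousLinearMap.comp_apply, ContinuousLinearMap.prod_apply,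
    ContinuousLinearMap.coe_id', id_eq, innerSL_apply_apply, smul_eq_mul] at key
  rw [ContinuousLinearMap.map_prodMk_eq_add] at key
  have hcoef : l ξ * (-(l ξ)⁻¹ * ⟪x - ξ, w⟫) = -⟪x - ξ, w⟫ := by field_simp
  linear_combination (norm := module) l ξ • key - hcoef • M (V ξ, ξ)
end

section
/- Let d be a natural number, l > 0, L > 0, and let f : ℝ^d → ℝ^d be Lipschitz with constant L. Let u₀, m ∈ ℝ^d, define the linear reconstruction u_θ(s) = u₀ + (s l) • m for s ∈ [0, 1], and let u_T : [0, 1] → ℝ^d be differentiable with u_T(0) = u₀ and u_T'(s) = l • f(u_T(s)) for all s ∈ [0, 1]. Define the path residual r(s) = l • (m − f(u_θ(s))). Then the endpoint error satisfies ‖u_θ(1) − u_T(1)‖ ≤ √(∫_{0}^{1} ‖r(s)‖² ds) · √((exp(2 l L) − 1) / (2 l L)). -/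
/-!
The error `e = uθ - uT` vanishes at `0` and satisfies `e' = r + l • (f uθ - f uT)`, so
`‖e'‖ ≤ ‖r‖ + l L ‖e‖`. Gronwall's inequality with forcing term `‖r‖` gives
`‖e 1‖ ≤ ∫₀¹ exp (l L (1 - s)) ‖r s‖ ds`, and Cauchy–Schwarz splits this into `√ε` times the
`L²` norm of the exponential weight, which is `√((exp (2 l L) - 1) / (2 l L))`.
-/

open MeasureTheory Set Real

theorem ContinuousOn.memLp_restrict_Icc {E : Type*} [NormedAddCommGroup E] {f : ℝ → E}
    {a b : ℝ} (hf : ContinuousOn f (Icc a b)) (p : ENNReal) :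
    MemLp f p (volume.restrict (Icc a b)) := by
  obtain ⟨C, hC⟩ := isCompact_Icc.exists_bound_of_continuousOn hf
  refine (memLp_top_of_bound (hf.aestronglyMeasurable measurableSet_Icc) C ?_).mono_exponent
    le_top
  filter_upwards [ae_restrict_mem measurableSet_Icc] with x hx using hC x hx

theorem intervalIntegral.integral_mul_le_sqrt_mul_sqrt {f g : ℝ → ℝ} {a b : ℝ} (hab : a ≤ b)
    (hf : ContinuousOn f (Icc a b)) (hg : ContinuousOn g (Icc a b))
    (hf₀ : ∀ x ∈ Icc a b, 0 ≤ f x) (hg₀ : ∀ x ∈ Icc a b, 0 ≤ g x) :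
    ∫ x in a..b, f x * g x ≤ √(∫ x in a..b, f x ^ 2) * √(∫ x in a..b, g x ^ 2) := by
  simp only [intervalIntegral.integral_of_le hab, ← integral_Icc_eq_integral_Ioc,
    sqrt_eq_rpow, ← rpow_two]
  exact integral_mul_le_Lp_mul_Lq_of_nonneg Real.HolderConjugate.two_two
    (ae_restrict_of_forall_mem measurableSet_Icc hf₀)
    (ae_restrict_of_forall_mem measurableSet_Icc hg₀) (hf.memLp_restrict_Icc _)
    (hg.memLp_restrict_Icc _)

theorem integral_exp_mul_one_sub_sq {c : ℝ} (hc : c ≠ 0) :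
    ∫ s in (0:ℝ)..1, exp (c * (1 - s)) ^ 2 = (exp (2 * c) - 1) / (2 * c) := by
  have h2c : 2 * c ≠ 0 := mul_ne_zero two_ne_zero hc
  calc ∫ s in (0:ℝ)..1, exp (c * (1 - s)) ^ 2 = ∫ s in (0:ℝ)..1, exp (2 * c * (1 - s)) := by
        simp only [← exp_nat_mul]; push_cast; ring_nf
    _ = ∫ t in (0:ℝ)..1, exp (2 * c * t) := by
        rw [intervalIntegral.integral_comp_sub_left (fun t => exp (2 * c * t))]; norm_num
    _ = (exp (2 * c) - 1) / (2 * c) := by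
        rw [intervalIntegral.integral_comp_mul_left (fun t => exp t) h2c, integral_exp]
        simp [div_eq_inv_mul]

theorem norm_smul_sub_smul_apply_le {E : Type*} [SeminormedAddCommGroup E] [NormedSpace ℝ E]
    {f : E → E} {l L : ℝ} (hl : 0 ≤ l) (hf : ∀ a b, ‖f a - f b‖ ≤ L * ‖a - b‖) (m u v : E) :
    ‖l • m - l • f v‖ ≤ ‖l • (m - f u)‖ + l * L * ‖u - v‖ :=
  calc ‖l • m - l • f v‖ = ‖l • (m - f u) + l • (f u - f v)‖ := by
        rw [← smul_add, sub_add_sub_cancel, smul_sub]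
    _ ≤ ‖l • (m - f u)‖ + ‖l • (f u - f v)‖ := norm_add_le _ _
    _ = ‖l • (m - f u)‖ + l * ‖f u - f v‖ := by
        rw [norm_smul l (f u - f v), Real.norm_of_nonneg hl]
    _ ≤ ‖l • (m - f u)‖ + l * L * ‖u - v‖ := by rw [mul_assoc]; gcongr; exact hf u v

theorem le_exp_mul_add_integral_of_deriv_right_le {E E' ρ : ℝ → ℝ} {a b K : ℝ} (hab : a ≤ b)
    (hE : ContinuousOn E (Icc a b))
    (hE' : ∀ x ∈ Ioo a b, HasDerivWithinAt E (E' x) (Ioi x) x)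
    (hρ : IntegrableOn ρ (Icc a b)) (hbound : ∀ x ∈ Ioo a b, E' x ≤ ρ x + K * E x) :
    E b ≤ exp (K * (b - a)) * E a + ∫ x in a..b, exp (K * (b - x)) * ρ x := by
  -- integrating factor `exp (-K t)`
  have hG : ∀ x ∈ Ioo a b, HasDerivWithinAt (fun t => exp (-K * t) * E t)
      (exp (-K * x) * (E' x - K * E x)) (Ioi x) x := fun x hx => by
    have hexp := ((hasDerivAt_id x).const_mul (-K)).exp.hasDerivWithinAt (s := Ioi x)
    refine (hexp.mul (hE' x hx)).congr_deriv ?_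
    simp only [id]
    ring
  have hint : exp (-K * b) * E b - exp (-K * a) * E a ≤ ∫ x in a..b, exp (-K * x) * ρ x :=
    intervalIntegral.sub_le_integral_of_hasDeriv_right_of_le hab
      ((by fun_prop : Continuous fun t => exp (-K * t)).continuousOn.mul hE) hG
      (hρ.continuousOn_mul (by fun_prop) isCompact_Icc)
      fun x hx => mul_le_mul_of_nonneg_left (by linarith [hbound x hx]) (exp_pos _).le
  calc E b = exp (K * (b - a)) * E a +
        exp (K * b) * (exp (-K * b) * E b - exp (-K * a) * E a) := by
        have h₁ : exp (K * b) * exp (-K * b) = 1 := by rw [← exp_add]; simp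
        have h₂ : exp (K * b) * exp (-K * a) = exp (K * (b - a)) := by rw [← exp_add]; ring_nf
        linear_combination -E b * h₁ + E a * h₂
    _ ≤ exp (K * (b - a)) * E a + exp (K * b) * ∫ x in a..b, exp (-K * x) * ρ x := by
        gcongr
    _ = exp (K * (b - a)) * E a + ∫ x in a..b, exp (K * (b - x)) * ρ x := by
        rw [← intervalIntegral.integral_const_mul]
        congr 1
        refine intervalIntegral.integral_congr fun x _ => ?_
        rw [← mul_assoc, ← exp_add]
        ring_nf

theorem norm_le_exp_mul_add_integral_of_norm_deriv_le {F : Type*} [NormedAddCommGroup F]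
    [NormedSpace ℝ F] [CompleteSpace F] {e e' : ℝ → F} {ρ : ℝ → ℝ} {a b K : ℝ} (hab : a ≤ b)
    (hK : 0 ≤ K) (he : ContinuousOn e (Icc a b))
    (he' : ∀ x ∈ Ioo a b, HasDerivWithinAt e (e' x) (Ioi x) x)
    (he'c : ContinuousOn e' (Icc a b)) (hρ : IntegrableOn ρ (Icc a b))
    (hbound : ∀ x ∈ Ioo a b, ‖e' x‖ ≤ ρ x + K * ‖e x‖) :
    ‖e b‖ ≤ exp (K * (b - a)) * ‖e a‖ + ∫ x in a..b, exp (K * (b - x)) * ρ x := by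
  -- `‖e‖` need not be differentiable, but the arc length `E` dominates it and is.
  set E : ℝ → ℝ := fun t => ‖e a‖ + ∫ x in a..t, ‖e' x‖
  have hnorm_le : ∀ t ∈ Icc a b, ‖e t‖ ≤ E t := fun t ht => by
    have hsub : Icc a t ⊆ Icc a b := Icc_subset_Icc_right ht.2
    have hFTC : ∫ x in a..t, e' x = e t - e a :=
      intervalIntegral.integral_eq_sub_of_hasDeriv_right_of_le ht.1 (he.mono hsub)
      (fun x hx => he' x ⟨hx.1, hx.2.trans_le ht.2⟩)
      ((he'c.mono hsub).intervalIntegrable_of_Icc ht.1)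
    calc ‖e t‖ ≤ ‖e a‖ + ‖e t - e a‖ := norm_le_norm_add_norm_sub' _ _
      _ ≤ E t := by
        rw [← hFTC]
        exact add_le_add le_rfl (intervalIntegral.norm_integral_le_integral_norm ht.1)
  have hE_cont : ContinuousOn E (Icc a b) := by
    refine continuousOn_const.add ?_
    rw [← uIcc_of_le hab]
    exact intervalIntegral.continuousOn_primitive_interval
      (uIcc_of_le hab ▸ he'c.norm.integrableOn_Icc)
  have hE_deriv : ∀ x ∈ Ioo a b, HasDerivWithinAt E ‖e' x‖ (Ioi x) x := fun x hx =>
    ((intervalIntegral.integral_hasDerivAt_right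
      ((he'c.norm.mono (Icc_subset_Icc_right hx.2.le)).intervalIntegrable_of_Icc hx.1.le)
      ((he'c.norm.mono Ioo_subset_Icc_self).stronglyMeasurableAtFilter isOpen_Ioo x hx)
      (he'c.norm.continuousAt (Icc_mem_nhds hx.1 hx.2))).const_add _).hasDerivWithinAt
  have hE_le := le_exp_mul_add_integral_of_deriv_right_le hab hE_cont hE_deriv hρ fun x hx =>
    (hbound x hx).trans (by gcongr; exact hnorm_le x (Ioo_subset_Icc_self hx))
  have hEa : E a = ‖e a‖ := by simp [E]
  exact (hnorm_le b ⟨hab, le_rfl⟩).trans (hEa ▸ hE_le)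

/-- A-posteriori endpoint error bound in terms of the squared MeanFlow
path-residual loss: `‖u_θ(1) − u_T(1)‖ ≤ √(∫₀¹ ‖r s‖² ds) · √((exp(2lL) − 1)/(2lL))`. -/
theorem stmt_5 (d : ℕ) (l L : ℝ) (hl : 0 < l) (hL : 0 < L)
    (f : EuclideanSpace ℝ (Fin d) → EuclideanSpace ℝ (Fin d))
    (hf : ∀ a b, ‖f a - f b‖ ≤ L * ‖a - b‖)
    (u₀ m : EuclideanSpace ℝ (Fin d))
    (uθ uT : ℝ → EuclideanSpace ℝ (Fin d))
    (huθ : ∀ s : ℝ, uθ s = u₀ + (s * l) • m)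
    (h0 : uT 0 = u₀)
    (huT : ∀ s ∈ Set.Icc (0:ℝ) 1,
      HasDerivWithinAt uT (l • f (uT s)) (Set.Icc (0:ℝ) 1) s)
    (r : ℝ → EuclideanSpace ℝ (Fin d))
    (hr : ∀ s : ℝ, r s = l • (m - f (uθ s))) :
    ‖uθ 1 - uT 1‖ ≤ Real.sqrt (∫ s in (0:ℝ)..1, ‖r s‖ ^ 2) *
      Real.sqrt ((Real.exp (2 * l * L) - 1) / (2 * l * L)) := by
  have hf_cont : Continuous f :=
    (LipschitzWith.of_dist_le_mul (K := L.toNNReal) fun a b => by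
      simpa [dist_eq_norm, Real.coe_toNNReal L hL.le] using hf a b).continuous
  have huθ_deriv : ∀ x, HasDerivAt uθ (l • m) x := fun x => by
    rw [show uθ = _ from funext huθ]
    simpa using (((hasDerivAt_id x).mul_const l).smul_const m).const_add u₀
  have huθ_cont : Continuous uθ :=
    continuous_iff_continuousAt.2 fun x => (huθ_deriv x).continuousAt
  have hr_cont : Continuous r := by
    rw [show r = _ from funext hr]
    fun_prop
  have huT_cont : ContinuousOn uT (Icc 0 1) := fun s hs => (huT s hs).continuousWithinAt
  have he_deriv : ∀ x ∈ Ioo (0:ℝ) 1,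
      HasDerivWithinAt (fun s => uθ s - uT s) (l • m - l • f (uT x)) (Ioi x) x := fun x hx =>
    (huθ_deriv x).hasDerivWithinAt.sub ((huT x (Ioo_subset_Icc_self hx)).mono_of_mem_nhdsWithin
      (Icc_mem_nhdsGT_of_mem ⟨hx.1.le, hx.2⟩))
  have he_deriv_le : ∀ x ∈ Ioo (0:ℝ) 1,
      ‖l • m - l • f (uT x)‖ ≤ ‖r x‖ + l * L * ‖uθ x - uT x‖ := fun x _ =>
    hr x ▸ norm_smul_sub_smul_apply_le hl.le hf m (uθ x) (uT x)
  have hgronwall := norm_le_exp_mul_add_integral_of_norm_deriv_le zero_le_one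
    (mul_pos hl hL).le (huθ_cont.continuousOn.sub huT_cont) he_deriv
    (continuousOn_const.sub ((hf_cont.comp_continuousOn huT_cont).const_smul l))
    hr_cont.norm.continuousOn.integrableOn_Icc he_deriv_le
  calc ‖uθ 1 - uT 1‖ ≤ ∫ x in (0:ℝ)..1, exp (l * L * (1 - x)) * ‖r x‖ := by
        simpa [huθ, h0] using hgronwall
    _ ≤ √(∫ x in (0:ℝ)..1, exp (l * L * (1 - x)) ^ 2) * √(∫ x in (0:ℝ)..1, ‖r x‖ ^ 2) :=
        intervalIntegral.integral_mul_le_sqrt_mul_sqrt zero_le_one (by fun_prop)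
          hr_cont.norm.continuousOn (fun _ _ => (exp_pos _).le) fun _ _ => norm_nonneg _
    _ = _ := by
        rw [integral_exp_mul_one_sub_sq (mul_pos hl hL).ne', mul_comm, mul_assoc]
end

section
/- Let d be a natural number, l > 0, L > 0, and let f : ℝ^d → ℝ^d be Lipschitz with constant L. Let u₀, m ∈ ℝ^d, define u_θ(s) = u₀ + (s l) • m for s ∈ [0, 1], and let u_T : [0, 1] → ℝ^d be differentiable with u_T(0) = u₀ and u_T'(s) = l • f(u_T(s)) for all s ∈ [0, 1]. Then the endpoint error obeys the a-posteriori bound with explicit second-order truncation term: ‖u_θ(1) − u_T(1)‖ ≤ (l ‖m − f(u₀)‖ + l² L ‖m‖) · (exp(l L) − 1) / (l L). -/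
/-- A-posteriori endpoint error bound with explicit second-order
truncation term:
`‖u_θ(1) − u_T(1)‖ ≤ (l ‖m − f u₀‖ + l² L ‖m‖) · (exp(lL) − 1)/(lL)`. -/
theorem stmt_6 (d : ℕ) (l L : ℝ) (hl : 0 < l) (hL : 0 < L)
    (f : EuclideanSpace ℝ (Fin d) → EuclideanSpace ℝ (Fin d))
    (hf : ∀ a b, ‖f a - f b‖ ≤ L * ‖a - b‖)
    (u₀ m : EuclideanSpace ℝ (Fin d))
    (uθ uT : ℝ → EuclideanSpace ℝ (Fin d))
    (huθ : ∀ s : ℝ, uθ s = u₀ + (s * l) • m)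
    (h0 : uT 0 = u₀)
    (huT : ∀ s ∈ Set.Icc (0:ℝ) 1,
      HasDerivWithinAt uT (l • f (uT s)) (Set.Icc (0:ℝ) 1) s) :
    ‖uθ 1 - uT 1‖ ≤ (l * ‖m - f u₀‖ + l ^ 2 * L * ‖m‖) *
      (Real.exp (l * L) - 1) / (l * L) := by
  set ε : ℝ := l * ‖m - f u₀‖ + l ^ 2 * L * ‖m‖ with hε
  set g : ℝ → EuclideanSpace ℝ (Fin d) := fun s => uθ s - uT s with hg
  have hlL : l * L ≠ 0 := by positivity
  -- derivative of uθ
  have hduθ : ∀ s : ℝ, HasDerivAt uθ (l • m) s := by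
    intro s
    have : HasDerivAt (fun s : ℝ => u₀ + (s * l) • m) (l • m) s := by
      have h1 : HasDerivAt (fun s : ℝ => s * l) l s := by
        simpa using (hasDerivAt_id s).mul_const l
      simpa using ((h1.smul_const m).const_add u₀)
    exact this.congr_of_eventuallyEq (Filter.Eventually.of_forall fun x => huθ x)
  have hgderiv : ∀ s ∈ Set.Ico (0:ℝ) 1,
      HasDerivWithinAt g (l • m - l • f (uT s)) (Set.Ici s) s := by
    intro s hs
    have h1 : HasDerivWithinAt uT (l • f (uT s)) (Set.Ici s) s := by
      exact ((huT s ⟨hs.1, hs.2.le⟩).mono (Set.Icc_subset_Icc_left hs.1)).mono_of_mem_nhdsWithin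
        (Icc_mem_nhdsGE_of_mem ⟨le_refl s, hs.2⟩)
    exact ((hduθ s).hasDerivWithinAt).sub h1
  have hgcont : ContinuousOn g (Set.Icc (0:ℝ) 1) := by
    have hTc : ContinuousOn uT (Set.Icc (0:ℝ) 1) :=
      fun s hs => (huT s hs).continuousWithinAt
    exact (ContinuousOn.sub (fun s _ => (hduθ s).continuousAt.continuousWithinAt) hTc)
  have hg0 : ‖g 0‖ ≤ 0 := by
    simp [hg, h0, huθ 0]
  have hbound : ∀ s ∈ Set.Ico (0:ℝ) 1,
      ‖l • m - l • f (uT s)‖ ≤ (l * L) * ‖g s‖ + ε := by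
    intro s hs
    have key : ‖m - f (uT s)‖ ≤ ‖m - f u₀‖ + l * L * ‖m‖ + L * ‖g s‖ := by
      have h1 : m - f (uT s) = (m - f u₀) + (f u₀ - f (uθ s)) + (f (uθ s) - f (uT s)) := by
        abel
      have h2 : ‖f u₀ - f (uθ s)‖ ≤ l * L * ‖m‖ := by
        calc ‖f u₀ - f (uθ s)‖ ≤ L * ‖u₀ - uθ s‖ := hf _ _
          _ = L * (|s| * l * ‖m‖) := by
              rw [huθ s]
              simp [norm_smul, abs_mul, abs_of_pos hl, mul_assoc, mul_comm, mul_left_comm]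
          _ ≤ l * L * ‖m‖ := by
              have hs1 : |s| ≤ 1 := by rw [abs_of_nonneg hs.1]; exact hs.2.le
              calc L * (|s| * l * ‖m‖) ≤ L * (1 * l * ‖m‖) := by
                    gcongr
                _ = l * L * ‖m‖ := by ring
      have h3 : ‖f (uθ s) - f (uT s)‖ ≤ L * ‖g s‖ := hf _ _
      calc ‖m - f (uT s)‖ ≤ ‖m - f u₀‖ + ‖f u₀ - f (uθ s)‖ + ‖f (uθ s) - f (uT s)‖ := by
            rw [h1]; exact norm_add₃_le
        _ ≤ ‖m - f u₀‖ + l * L * ‖m‖ + L * ‖g s‖ := by linarith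
    calc ‖l • m - l • f (uT s)‖ = l * ‖m - f (uT s)‖ := by
          rw [← smul_sub, norm_smul, Real.norm_eq_abs, abs_of_pos hl]
      _ ≤ l * (‖m - f u₀‖ + l * L * ‖m‖ + L * ‖g s‖) := by
          exact mul_le_mul_of_nonneg_left key hl.le
      _ = (l * L) * ‖g s‖ + ε := by rw [hε]; ring
  have main := norm_le_gronwallBound_of_norm_deriv_right_le hgcont hgderiv hg0 hbound
    1 ⟨zero_le_one, le_refl 1⟩
  rw [gronwallBound_of_K_ne_0 hlL] at main
  simp only [sub_zero, mul_one, zero_mul, zero_add] at main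
  calc ‖uθ 1 - uT 1‖ = ‖g 1‖ := rfl
    _ ≤ ε / (l * L) * (Real.exp (l * L) - 1) := main
    _ = ε * (Real.exp (l * L) - 1) / (l * L) := by ring
end

section
/- Let d, n be natural numbers. Let m, h, m_τ ∈ ℝ^d, let K be a d × d real matrix, G and P be d × n real matrices, g ∈ ℝ^n, and Δx ∈ ℝ^n with l_s := ‖Δx‖ > 0. Let l_t > 0 and l := √(l_t² + l_s²). Define f := G g + h, the spatio-temporal MeanFlow residual r_MF := l_t • m − l • (K f) − l² • m_τ, the temporal residual r_T := m − K f − l_t • m_τ, the spatial residual matrix R_S := l_s • (K G) − m Δxᵀ + l_s² • P, and the structural remainder r := ((l_t − l)/l_s) • ((m Δxᵀ − l_s² • P) g) + (l_t − l) • (K h) + (l_t² − l²) • m_τ. Then the space-time decoupling bound holds: ‖r_MF‖² ≤ 3 l_t² ‖r_T‖² + 3 ((l − l_t)/l_s)² ‖g‖² ‖R_S‖_op² + 3 ‖r‖². -/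
set_option maxHeartbeats 1000000

lemma three_sq_bound {E : Type*} [NormedAddCommGroup E] (a b c : E) :
    ‖a + b + c‖ ^ 2 ≤ 3 * (‖a‖ ^ 2 + ‖b‖ ^ 2 + ‖c‖ ^ 2) := by
  have h1 : ‖a + b + c‖ ≤ ‖a‖ + ‖b‖ + ‖c‖ :=
    (norm_add_le _ _).trans (by gcongr; exact norm_add_le _ _)
  nlinarith [norm_nonneg a, norm_nonneg b, norm_nonneg c, norm_nonneg (a + b + c),
    sq_nonneg (‖a‖ - ‖b‖), sq_nonneg (‖a‖ - ‖c‖), sq_nonneg (‖b‖ - ‖c‖)]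

/-- Space-time decoupling bound. Matrices (with the operator norm induced
by the Euclidean norms) are represented as continuous linear maps between Euclidean
spaces; the outer product `m Δxᵀ` is the map `w ↦ ⟪Δx, w⟫ • m`, i.e.
`(innerSL ℝ Δx).smulRight m`. -/
theorem stmt_9 (d n : ℕ)
    (m h mτ : EuclideanSpace ℝ (Fin d))
    (K : EuclideanSpace ℝ (Fin d) →L[ℝ] EuclideanSpace ℝ (Fin d))
    (G P : EuclideanSpace ℝ (Fin n) →L[ℝ] EuclideanSpace ℝ (Fin d))
    (g Δx : EuclideanSpace ℝ (Fin n))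
    (ls lt l : ℝ)
    (hls : ls = ‖Δx‖) (hlspos : 0 < ls)
    (hltpos : 0 < lt) (hl : l = Real.sqrt (lt ^ 2 + ls ^ 2))
    (f : EuclideanSpace ℝ (Fin d)) (hf : f = G g + h)
    (rMF : EuclideanSpace ℝ (Fin d))
    (hrMF : rMF = lt • m - l • K f - l ^ 2 • mτ)
    (rT : EuclideanSpace ℝ (Fin d))
    (hrT : rT = m - K f - lt • mτ)
    (RS : EuclideanSpace ℝ (Fin n) →L[ℝ] EuclideanSpace ℝ (Fin d))
    (hRS : RS = ls • K.comp G - (innerSL ℝ Δx).smulRight m + ls ^ 2 • P)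
    (r : EuclideanSpace ℝ (Fin d))
    (hr : r = ((lt - l) / ls) • (((innerSL ℝ Δx).smulRight m - ls ^ 2 • P) g)
          + (lt - l) • K h + (lt ^ 2 - l ^ 2) • mτ) :
    ‖rMF‖ ^ 2 ≤ 3 * lt ^ 2 * ‖rT‖ ^ 2
      + 3 * ((l - lt) / ls) ^ 2 * ‖g‖ ^ 2 * ‖RS‖ ^ 2 + 3 * ‖r‖ ^ 2 := by
  have hls0 : ls ≠ 0 := ne_of_gt hlspos
  have key : rMF = lt • rT + ((lt - l) / ls) • (RS g) + r := by
    subst hrMF hrT hRS hr hf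
    simp only [ContinuousLinearMap.add_apply, ContinuousLinearMap.sub_apply,
      ContinuousLinearMap.smul_apply, ContinuousLinearMap.comp_apply,
      ContinuousLinearMap.smulRight_apply, map_add]
    match_scalars <;> field_simp <;> ring
  have hb : ‖((lt - l) / ls) • (RS g)‖ ^ 2
      ≤ ((l - lt) / ls) ^ 2 * ‖g‖ ^ 2 * ‖RS‖ ^ 2 := by
    rw [norm_smul]
    have hRg : ‖RS g‖ ≤ ‖RS‖ * ‖g‖ := RS.le_opNorm g
    have h1 : |((lt - l) / ls)| ^ 2 = ((l - lt) / ls) ^ 2 := by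
      rw [sq_abs]; ring
    rw [mul_pow, Real.norm_eq_abs, h1]
    have h2 : ‖RS g‖ ^ 2 ≤ (‖RS‖ * ‖g‖) ^ 2 := by
      apply pow_le_pow_left₀ (norm_nonneg _) hRg
    calc ((l - lt) / ls) ^ 2 * ‖RS g‖ ^ 2
        ≤ ((l - lt) / ls) ^ 2 * (‖RS‖ * ‖g‖) ^ 2 := by
          exact mul_le_mul_of_nonneg_left h2 (sq_nonneg _)
      _ = ((l - lt) / ls) ^ 2 * ‖g‖ ^ 2 * ‖RS‖ ^ 2 := by ring
  have ha : ‖lt • rT‖ ^ 2 = lt ^ 2 * ‖rT‖ ^ 2 := by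
    rw [norm_smul, mul_pow, Real.norm_eq_abs, sq_abs]
  calc ‖rMF‖ ^ 2 = ‖lt • rT + ((lt - l) / ls) • (RS g) + r‖ ^ 2 := by rw [key]
    _ ≤ 3 * (‖lt • rT‖ ^ 2 + ‖((lt - l) / ls) • (RS g)‖ ^ 2 + ‖r‖ ^ 2) :=
        three_sq_bound _ _ _
    _ ≤ _ := by rw [ha]; nlinarith [hb]
end

section
/- Let d, n be natural numbers. Let m, h ∈ ℝ^d, let K be a d × d real matrix with ‖K‖_op ≤ ρ, G and P be d × n real matrices, g ∈ ℝ^n, and Δx ∈ ℝ^n with l_s := ‖Δx‖ > 0. Define f := G g + h, the static MeanFlow residual r_MF := −l_s • (K f), and the spatial residual matrix R_S := l_s • (K G) − m Δxᵀ + l_s² • P. Then ‖r_MF‖ ≤ ‖g‖ ‖R_S‖_op + l_s ‖m‖ ‖g‖ + l_s² ‖P‖_op ‖g‖ + l_s ρ ‖h‖. -/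
/-! Since `R_S = l_s K G - m Δxᵀ + l_s² P`, the operator `l_s K G` equals
`R_S + m Δxᵀ - l_s² P`, whose norm is at most `‖R_S‖ + l_s ‖m‖ + l_s² ‖P‖` because the rank-one
map `m Δxᵀ` has norm `‖Δx‖ ‖m‖`. Applying this to `g` and bounding the source part
`l_s K h` by `l_s ρ ‖h‖` estimates `r_MF = -l_s K (G g + h)`. -/

open ContinuousLinearMap

section

variable {E F F' : Type*} [NormedAddCommGroup E] [InnerProductSpace ℝ E]
  [NormedAddCommGroup F] [NormedSpace ℝ F] [NormedAddCommGroup F'] [NormedSpace ℝ F']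

theorem norm_innerSL_smulRight (u : E) (m : F) : ‖(innerSL ℝ u).smulRight m‖ = ‖u‖ * ‖m‖ := by
  rw [norm_smulRight_apply, innerSL_apply_norm]

theorem norm_smul_comp_le_residual (ls : ℝ) (K : F →L[ℝ] F') (G : E →L[ℝ] F)
    (P : E →L[ℝ] F') (m : F') (Δx : E) :
    ‖ls • K.comp G‖ ≤
      ‖ls • K.comp G - (innerSL ℝ Δx).smulRight m + ls ^ 2 • P‖ + ‖Δx‖ * ‖m‖ + ls ^ 2 * ‖P‖ := by
  set RS := ls • K.comp G - (innerSL ℝ Δx).smulRight m + ls ^ 2 • P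
  have hdecomp : ls • K.comp G = RS + (innerSL ℝ Δx).smulRight m - ls ^ 2 • P := by
    simp only [RS]; abel
  calc ‖ls • K.comp G‖ ≤ ‖RS‖ + ‖(innerSL ℝ Δx).smulRight m‖ + ‖ls ^ 2 • P‖ := by
        rw [hdecomp]; exact (norm_sub_le _ _).trans (add_le_add_left (norm_add_le _ _) _)
    _ = ‖RS‖ + ‖Δx‖ * ‖m‖ + ls ^ 2 * ‖P‖ := by
        rw [norm_innerSL_smulRight, norm_smul, Real.norm_of_nonneg (sq_nonneg ls)]

theorem norm_smul_apply_le {ρ : ℝ} (K : F →L[ℝ] F') (hK : ‖K‖ ≤ ρ) {ls : ℝ} (hls : 0 ≤ ls)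
    (h : F) : ‖ls • K h‖ ≤ ls * ρ * ‖h‖ := by
  rw [norm_smul, Real.norm_of_nonneg hls, mul_assoc]
  exact mul_le_mul_of_nonneg_left (K.le_of_opNorm_le hK h) hls

end

/-- The outer product `m Δxᵀ` is encoded as `(innerSL ℝ Δx).smulRight m`. -/
theorem stmt_11_general (d n : ℕ)
    (m h : EuclideanSpace ℝ (Fin d))
    (K : EuclideanSpace ℝ (Fin d) →L[ℝ] EuclideanSpace ℝ (Fin d))
    (ρ : ℝ) (hK : ‖K‖ ≤ ρ)
    (G P : EuclideanSpace ℝ (Fin n) →L[ℝ] EuclideanSpace ℝ (Fin d))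
    (g Δx : EuclideanSpace ℝ (Fin n))
    (ls : ℝ) (hls : ls = ‖Δx‖)
    (f : EuclideanSpace ℝ (Fin d)) (hf : f = G g + h)
    (rMF : EuclideanSpace ℝ (Fin d))
    (hrMF : rMF = -(ls • K f))
    (RS : EuclideanSpace ℝ (Fin n) →L[ℝ] EuclideanSpace ℝ (Fin d))
    (hRS : RS = ls • K.comp G - (innerSL ℝ Δx).smulRight m + ls ^ 2 • P) :
    ‖rMF‖ ≤ ‖g‖ * ‖RS‖ + ls * ‖m‖ * ‖g‖ + ls ^ 2 * ‖P‖ * ‖g‖ + ls * ρ * ‖h‖ := by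
  subst hls hf hrMF hRS
  have hgradient := ((‖Δx‖ • K.comp G).le_opNorm g).trans <|
    mul_le_mul_of_nonneg_right (norm_smul_comp_le_residual _ K G P m Δx)
      (norm_nonneg g)
  have hsource := norm_smul_apply_le K hK (norm_nonneg Δx) h
  calc ‖-(‖Δx‖ • K (G g + h))‖ = ‖(‖Δx‖ • K.comp G) g + ‖Δx‖ • K h‖ := by
        rw [norm_neg, map_add, smul_add]; rfl
    _ ≤ _ := norm_add_le_of_le hgradient hsource
    _ = _ := by ring

/-- Steady-state (γ = 0) case of the space-time decoupling analysis:
the static MeanFlow residual is controlled by the spatial MeanFlow residual up to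
terms of order `l_s`. Matrices are represented as continuous linear maps between
Euclidean spaces (with the induced operator norm); the outer product `m Δxᵀ` is
`(innerSL ℝ Δx).smulRight m`. -/
theorem stmt_11 (d n : ℕ)
    (m h : EuclideanSpace ℝ (Fin d))
    (K : EuclideanSpace ℝ (Fin d) →L[ℝ] EuclideanSpace ℝ (Fin d))
    (ρ : ℝ) (hK : ‖K‖ ≤ ρ)
    (G P : EuclideanSpace ℝ (Fin n) →L[ℝ] EuclideanSpace ℝ (Fin d))
    (g Δx : EuclideanSpace ℝ (Fin n))
    (ls : ℝ) (hls : ls = ‖Δx‖) (hlspos : 0 < ls)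
    (f : EuclideanSpace ℝ (Fin d)) (hf : f = G g + h)
    (rMF : EuclideanSpace ℝ (Fin d))
    (hrMF : rMF = -(ls • K f))
    (RS : EuclideanSpace ℝ (Fin n) →L[ℝ] EuclideanSpace ℝ (Fin d))
    (hRS : RS = ls • K.comp G - (innerSL ℝ Δx).smulRight m + ls ^ 2 • P) :
    ‖rMF‖ ≤ ‖g‖ * ‖RS‖ + ls * ‖m‖ * ‖g‖ + ls ^ 2 * ‖P‖ * ‖g‖ + ls * ρ * ‖h‖ :=
  stmt_11_general d n m h K ρ hK G P g Δx ls hls f hf rMF hrMF RS hRS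
end

section
/- Let d, n be natural numbers. Let m, h, m_τ ∈ ℝ^d, let K be a d × d real matrix with ‖K‖_op ≤ ρ, P a d × n real matrix, g ∈ ℝ^n, and Δx ∈ ℝ^n with l_s := ‖Δx‖ > 0. Let l_t > 0 and l := √(l_t² + l_s²), and define the structural remainder r := ((l_t − l)/l_s) • ((m Δxᵀ − l_s² • P) g) + (l_t − l) • (K h) + (l_t² − l²) • m_τ. Then ‖r‖² ≤ 3 l_s⁴ · [ ((‖m‖ + l_s ‖P‖_op)² ‖g‖² + ρ² ‖h‖²) / (l + l_t)² + ‖m_τ‖² ]; in particular the structural coupling error 3‖r‖² is of order l_s⁴ as l_s → 0 with l_t fixed. -/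
set_option maxHeartbeats 1000000 in
/-- The structural remainder `r` of the space-time decoupling in the
time-dependent case (γ = 1) satisfies
`‖r‖² ≤ 3 l_s⁴ · [((‖m‖ + l_s ‖P‖)² ‖g‖² + ρ² ‖h‖²)/(l + l_t)² + ‖m_τ‖²]`,
so the structural coupling error `3‖r‖²` is of order `l_s⁴`. Matrices are
represented as continuous linear maps between Euclidean spaces (with the induced
operator norm); the outer product `m Δxᵀ` is `(innerSL ℝ Δx).smulRight m`. -/
theorem stmt_12 (d n : ℕ)
    (m h mτ : EuclideanSpace ℝ (Fin d))
    (K : EuclideanSpace ℝ (Fin d) →L[ℝ] EuclideanSpace ℝ (Fin d))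
    (ρ : ℝ) (hK : ‖K‖ ≤ ρ)
    (P : EuclideanSpace ℝ (Fin n) →L[ℝ] EuclideanSpace ℝ (Fin d))
    (g Δx : EuclideanSpace ℝ (Fin n))
    (ls lt l : ℝ)
    (hls : ls = ‖Δx‖) (hlspos : 0 < ls)
    (hltpos : 0 < lt) (hl : l = Real.sqrt (lt ^ 2 + ls ^ 2))
    (r : EuclideanSpace ℝ (Fin d))
    (hr : r = ((lt - l) / ls) • (((innerSL ℝ Δx).smulRight m - ls ^ 2 • P) g)
          + (lt - l) • K h + (lt ^ 2 - l ^ 2) • mτ) :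
    ‖r‖ ^ 2 ≤ 3 * ls ^ 4 *
      (((‖m‖ + ls * ‖P‖) ^ 2 * ‖g‖ ^ 2 + ρ ^ 2 * ‖h‖ ^ 2) / (l + lt) ^ 2
        + ‖mτ‖ ^ 2) := by
  have hlsq : l ^ 2 = lt ^ 2 + ls ^ 2 := by
    rw [hl]; exact Real.sq_sqrt (by positivity)
  have hlnn : 0 ≤ l := by rw [hl]; positivity
  have hlpos : 0 < l := by nlinarith
  have hsum : 0 < l + lt := by linarith
  have hltl : lt ≤ l := by nlinarith
  have hdiff : l - lt = ls ^ 2 / (l + lt) := by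
    field_simp; nlinarith
  have hρ : 0 ≤ ρ := le_trans (norm_nonneg K) hK
  set A := ls ^ 2 * ((‖m‖ + ls * ‖P‖) * ‖g‖) / (l + lt) with hA
  set B := ls ^ 2 * (ρ * ‖h‖) / (l + lt) with hB
  set C := ls ^ 2 * ‖mτ‖ with hC
  have hA0 : 0 ≤ A := by
    apply div_nonneg _ hsum.le
    have : 0 ≤ ‖m‖ + ls * ‖P‖ := by positivity
    positivity
  have hB0 : 0 ≤ B := by positivity
  have hC0 : 0 ≤ C := by positivity
  have ha : ‖((lt - l) / ls) • (((innerSL ℝ Δx).smulRight m - ls ^ 2 • P) g)‖ ≤ A := by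
    rw [norm_smul]
    have h1 : ‖(innerSL ℝ Δx).smulRight m - ls ^ 2 • P‖ ≤ ls * ‖m‖ + ls ^ 2 * ‖P‖ := by
      refine (norm_sub_le _ _).trans ?_
      have e1 : ‖(innerSL ℝ Δx).smulRight m‖ = ls * ‖m‖ := by
        rw [ContinuousLinearMap.norm_smulRight_apply, innerSL_apply_norm, ← hls]
      have e2 : ‖ls ^ 2 • P‖ ≤ ls ^ 2 * ‖P‖ := by
        refine (norm_smul_le (ls ^ 2) P).trans_eq ?_
        rw [Real.norm_eq_abs, abs_of_nonneg (by positivity : (0:ℝ) ≤ ls ^ 2)]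
      linarith [e1.le, e2]
    have h2 : ‖((innerSL ℝ Δx).smulRight m - ls ^ 2 • P) g‖ ≤
        (ls * ‖m‖ + ls ^ 2 * ‖P‖) * ‖g‖ := by
      refine (ContinuousLinearMap.le_opNorm _ _).trans ?_
      exact mul_le_mul_of_nonneg_right h1 (norm_nonneg g)
    have h3 : ‖(lt - l) / ls‖ = (l - lt) / ls := by
      rw [Real.norm_eq_abs, abs_div, abs_of_nonpos (by linarith), abs_of_pos hlspos]
      ring
    rw [h3, hA]
    have h4 : (ls ^ 2 / (l + lt)) / ls * ((ls * ‖m‖ + ls ^ 2 * ‖P‖) * ‖g‖)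
        = ls ^ 2 * ((‖m‖ + ls * ‖P‖) * ‖g‖) / (l + lt) := by
      field_simp
    calc (l - lt) / ls * ‖((innerSL ℝ Δx).smulRight m - ls ^ 2 • P) g‖
        ≤ (l - lt) / ls * ((ls * ‖m‖ + ls ^ 2 * ‖P‖) * ‖g‖) := by
          apply mul_le_mul_of_nonneg_left h2
          apply div_nonneg (by linarith) hlspos.le
      _ = ls ^ 2 * ((‖m‖ + ls * ‖P‖) * ‖g‖) / (l + lt) := by rw [hdiff]; exact h4
  have hb : ‖(lt - l) • K h‖ ≤ B := by
    rw [norm_smul, Real.norm_eq_abs, abs_of_nonpos (by linarith)]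
    have h5 : ‖K h‖ ≤ ρ * ‖h‖ := by
      refine (ContinuousLinearMap.le_opNorm _ _).trans ?_
      exact mul_le_mul_of_nonneg_right hK (norm_nonneg h)
    have h6 : -(lt - l) = ls ^ 2 / (l + lt) := by rw [← hdiff]; ring
    have h7 : -(lt - l) * ‖K h‖ ≤ ls ^ 2 / (l + lt) * (ρ * ‖h‖) := by
      rw [h6]; exact mul_le_mul_of_nonneg_left h5 (by positivity)
    have h8 : ls ^ 2 / (l + lt) * (ρ * ‖h‖) = B := by rw [hB]; ring
    linarith
  have hc : ‖(lt ^ 2 - l ^ 2) • mτ‖ ≤ C := by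
    rw [norm_smul, Real.norm_eq_abs]
    have : lt ^ 2 - l ^ 2 = -(ls ^ 2) := by linarith
    rw [this, abs_neg, abs_of_nonneg (by positivity : (0:ℝ) ≤ ls ^ 2)]
  have hrle : ‖r‖ ≤ A + B + C := by
    rw [hr]
    calc ‖((lt - l) / ls) • (((innerSL ℝ Δx).smulRight m - ls ^ 2 • P) g)
          + (lt - l) • K h + (lt ^ 2 - l ^ 2) • mτ‖
        ≤ ‖((lt - l) / ls) • (((innerSL ℝ Δx).smulRight m - ls ^ 2 • P) g)
          + (lt - l) • K h‖ + ‖(lt ^ 2 - l ^ 2) • mτ‖ := norm_add_le _ _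
      _ ≤ (‖((lt - l) / ls) • (((innerSL ℝ Δx).smulRight m - ls ^ 2 • P) g)‖
          + ‖(lt - l) • K h‖) + ‖(lt ^ 2 - l ^ 2) • mτ‖ := by
            gcongr; exact norm_add_le _ _
      _ ≤ A + B + C := by gcongr
  have hRHS : 3 * ls ^ 4 *
      (((‖m‖ + ls * ‖P‖) ^ 2 * ‖g‖ ^ 2 + ρ ^ 2 * ‖h‖ ^ 2) / (l + lt) ^ 2
        + ‖mτ‖ ^ 2) = 3 * (A ^ 2 + B ^ 2 + C ^ 2) := by
    rw [hA, hB, hC]; field_simp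
  rw [hRHS]
  have hr2 : ‖r‖ ^ 2 ≤ (A + B + C) ^ 2 := by
    have := norm_nonneg r
    nlinarith
  nlinarith [sq_nonneg (A - B), sq_nonneg (A - C), sq_nonneg (B - C)]
end

section
/- Let n, d be natural numbers and c : ℝ^d → ℝ^n be any function. Let u : ℝ^n × ℝ → ℝ^d be continuously Fréchet differentiable and satisfy the d'Alembert transport equation ∂_τ u(ξ, τ) + D_ξ u(ξ, τ)(c(u(ξ, τ))) = 0 for all (ξ, τ) in an open set Ω ⊆ ℝ^n × ℝ. Fix (x, t) ∈ ℝ^n × ℝ, set l(ξ, τ) = √(‖x − ξ‖² + (t − τ)²), and let M : ℝ^d × ℝ^n × ℝ → ℝ^d be continuously Fréchet differentiable with l(ξ, τ) • M(u(ξ, τ), ξ, τ) = u(x, t) − u(ξ, τ) for all (ξ, τ) ∈ Ω. Then at every (ξ, τ) ∈ Ω with l(ξ, τ) > 0, the MeanFlow constraint for d'Alembert's equation holds: (t − τ + ⟪x − ξ, c(u(ξ, τ))⟫) • M(u(ξ, τ), ξ, τ) = l(ξ, τ)² • [ D_ξ M(u(ξ, τ), ξ, τ)(c(u(ξ, τ)))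 + ∂_τ M(u(ξ, τ), ξ, τ) ]. -/
/-!
Differentiate the identity `l • M(u, ·) = u(x, t) - u` along the characteristic direction
`v = (c(u(ξ, τ)), 1)`. The transport equation says exactly that `D u · v = 0`, so the right-hand
side is stationary in that direction, and the left-hand side gives
`(D l · v) • M + l • D M · (0, v) = 0` with `D l · v = -(t - τ + ⟪x - ξ, c⟫) / l`.
Multiplying by `-l` yields the MeanFlow constraint.
-/

open scoped RealInnerProductSpace
open Filter Topology

section
variable {G V : Type*} [NormedAddCommGroup G] [NormedSpace ℝ G]
  [NormedAddCommGroup V] [NormedSpace ℝ V]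

theorem fderiv_smul_apply_of_eventuallyEq_const_sub {f : G → ℝ} {m g : G → V} {p : G} {a : V}
    (hf : DifferentiableAt ℝ f p) (hm : DifferentiableAt ℝ m p)
    (h : (fun q => f q • m q) =ᶠ[𝓝 p] fun q => a - g q) (v : G) :
    fderiv ℝ f p v • m p + f p • fderiv ℝ m p v = -fderiv ℝ g p v := by
  have hderiv := DFunLike.congr_fun (h.fderiv_eq (𝕜 := ℝ)) v
  rw [fderiv_const_sub, show (fun q => f q • m q) = f • m from rfl, fderiv_smul hf hm] at hderiv
  simpa [add_comm] using hderiv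

theorem fderiv_comp_prodMk_id_apply {W : Type*} [NormedAddCommGroup W] [NormedSpace ℝ W]
    {M : V × G → W} {u : G → V} {p : G} (hM : DifferentiableAt ℝ M (u p, p))
    (hu : DifferentiableAt ℝ u p) (v : G) :
    fderiv ℝ (fun q => M (u q, q)) p v = fderiv ℝ M (u p, p) (fderiv ℝ u p v, v) :=
  DFunLike.congr_fun (hM.hasFDerivAt.comp (f := fun q => (u q, q)) p
    (hu.hasFDerivAt.prodMk (hasFDerivAt_id p))).fderiv v
end

section
variable {E : Type*} [NormedAddCommGroup E] [InnerProductSpace ℝ E]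

noncomputable def spaceTimeDist (x : E) (t : ℝ) (q : E × ℝ) : ℝ :=
  √(‖x - q.1‖ ^ 2 + (t - q.2) ^ 2)

theorem hasFDerivAt_spaceTimeDist {x : E} {t : ℝ} {p : E × ℝ}
    (hp : spaceTimeDist x t p ≠ 0) :
    HasFDerivAt (spaceTimeDist x t)
      (-(spaceTimeDist x t p)⁻¹ •
        ((innerSL ℝ (x - p.1)).comp (ContinuousLinearMap.fst ℝ E ℝ)
          + (t - p.2) • ContinuousLinearMap.snd ℝ E ℝ)) p := by
  set L := (innerSL ℝ (x - p.1)).comp (ContinuousLinearMap.fst ℝ E ℝ)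
    + (t - p.2) • ContinuousLinearMap.snd ℝ E ℝ
  have hsq :
      HasFDerivAt (fun q : E × ℝ => ‖x - q.1‖ ^ 2 + (t - q.2) ^ 2) ((-2 : ℝ) • L) p :=
    ((hasFDerivAt_fst.const_sub x).norm_sq.add
      ((hasFDerivAt_snd.const_sub t).pow 2)).congr_fderiv (by
        ext
        · simp [L]
          ring
        · simp [L])
  have hrad : ‖x - p.1‖ ^ 2 + (t - p.2) ^ 2 ≠ 0 :=
    fun h => hp (by simp [spaceTimeDist, h])
  refine (hsq.sqrt hrad).congr_fderiv ?_
  rw [smul_smul]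
  congr 1
  simp only [spaceTimeDist] at hp ⊢
  field_simp
end

/-- Partial derivatives are read off the full Fréchet derivative:
`∂_τ u = fderiv ℝ u p (0, 1)`, `D_ξ u w = fderiv ℝ u p (w, 0)`, and likewise for `M`
in the directions `(0, w, 0)` and `(0, 0, 1)`. -/
theorem stmt_13 (n d : ℕ)
    (c : EuclideanSpace ℝ (Fin d) → EuclideanSpace ℝ (Fin n))
    (u : EuclideanSpace ℝ (Fin n) × ℝ → EuclideanSpace ℝ (Fin d))
    (hu : ContDiff ℝ 1 u)
    (Ω : Set (EuclideanSpace ℝ (Fin n) × ℝ)) (hΩ : IsOpen Ω)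
    (hpde : ∀ p ∈ Ω,
      fderiv ℝ u p (0, 1) + fderiv ℝ u p (c (u p), 0) = 0)
    (x : EuclideanSpace ℝ (Fin n)) (t : ℝ)
    (l : EuclideanSpace ℝ (Fin n) × ℝ → ℝ)
    (hl : ∀ ξ τ, l (ξ, τ) = Real.sqrt (‖x - ξ‖ ^ 2 + (t - τ) ^ 2))
    (M : EuclideanSpace ℝ (Fin d) × EuclideanSpace ℝ (Fin n) × ℝ →
      EuclideanSpace ℝ (Fin d))
    (hM : ContDiff ℝ 1 M)
    (hfund : ∀ p ∈ Ω, l p • M (u p, p.1, p.2) = u (x, t) - u p) :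
    ∀ ξ τ, (ξ, τ) ∈ Ω → 0 < l (ξ, τ) →
      (t - τ + ⟪x - ξ, c (u (ξ, τ))⟫) • M (u (ξ, τ), ξ, τ)
        = l (ξ, τ) ^ 2 •
          ((fderiv ℝ M (u (ξ, τ), ξ, τ)) (0, c (u (ξ, τ)), 0)
            + (fderiv ℝ M (u (ξ, τ), ξ, τ)) (0, 0, 1)) := by
  intro ξ τ hmem hlpos
  obtain rfl : l = spaceTimeDist x t := funext fun q => hl q.1 q.2
  set p : EuclideanSpace ℝ (Fin n) × ℝ := (ξ, τ)
  set κ := c (u p)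
  have hdist := hasFDerivAt_spaceTimeDist hlpos.ne'
  have hud : DifferentiableAt ℝ u p := hu.differentiable one_ne_zero p
  have hMd : DifferentiableAt ℝ M (u p, p) := hM.differentiable one_ne_zero _
  have hchar : fderiv ℝ u p (κ, 1) = 0 := by
    rw [show ((κ, 1) : EuclideanSpace ℝ (Fin n) × ℝ) = (0, 1) + (κ, 0) by simp, map_add]
    exact hpde p hmem
  have hkey := fderiv_smul_apply_of_eventuallyEq_const_sub (m := fun q => M (u q, q))
    hdist.differentiableAt (hMd.comp (f := fun q => (u q, q)) p (hud.prodMk differentiableAt_id))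
    (eventuallyEq_of_mem (hΩ.mem_nhds hmem) hfund) (κ, 1)
  rw [hdist.fderiv, fderiv_comp_prodMk_id_apply hMd hud, hchar, neg_zero,
    show ((0, κ, 1) : EuclideanSpace ℝ (Fin d) × EuclideanSpace ℝ (Fin n) × ℝ)
      = (0, κ, 0) + (0, 0, 1) by simp, map_add] at hkey
  simp only [smul_apply, add_apply,
    ContinuousLinearMap.comp_apply, ContinuousLinearMap.coe_fst', ContinuousLinearMap.coe_snd',
    innerSL_apply_apply, smul_eq_mul, mul_one] at hkey
  linear_combination (norm := match_scalars) (-spaceTimeDist x t p) • hkey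
  · field_simp
    simp only [p]
    ring
  all_goals ring
end
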